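/- Let H_i(x,y) = c_i x − d_i y for i = 1,…,r with c_i d_i ≠ 0 and the lines {H_i = 0} pairwise distinct. Define h : ℝ² → ℝ² by h(x,y) = (x²/(1 + ∏ᵢ H_i(x,y)²), y²/(1 + ∏ᵢ H_i(x,y)²)). Then each point p_i := (0 : d_i² : c_i²) ∈ ℝP² lies in the set of points at infinity of h(ℝ²); indeed h(d_i/t, c_i/t) = (d_i²/t², c_i²/t²) for all t ≠ 0, and this tends to p_i in ℝP² as t → 0⁺. -/

import Mathlib

/-! On the line `{c_i x = d_i y}` the product `∏ⱼ H_j²` vanishes, so `h` restricts there to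
`(x, y) ↦ (x², y²)`. Along `t ↦ (d_i / t, c_i / t)` the image is therefore
`(1 : d_i²/t² : c_i²/t²) = (t² : d_i² : c_i²)` in `ℝP²`, whose homogeneous coordinates converge
to the nonzero vector `(0, d_i², c_i²)`; continuity of the quotient map `V ∖ {0} → ℙ(V)` gives
the limit, which lies on the line at infinity and in the closure of the image. -/

open Projectivization Filter Topology Set

noncomputable section

instance (K V : Type*) [DivisionRing K] [AddCommGroup V] [Module K V] [TopologicalSpace V] :
    TopologicalSpace (Projectivization K V) := by
  unfold Projectivization; infer_instance

/-- The embedding of the affine plane `ℝ²` into `ℝP²` as the chart `{x₀ = 1}`. -/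
def embR2 (p : ℝ × ℝ) : Projectivization ℝ (Fin 3 → ℝ) :=
  Projectivization.mk ℝ ![1, p.1, p.2] (by intro h; have := congrFun h 0; simp at this)

/-- The line at infinity `{x₀ = 0}` of `ℝP²`. -/
def lineAtInf : Set (Projectivization ℝ (Fin 3 → ℝ)) := {q | q.rep 0 = 0}

/-- The set of points at infinity of `S ⊆ ℝ²`: the closure of `S` in `ℝP²`
intersected with the line at infinity. -/
def ptsAtInf (S : Set (ℝ × ℝ)) : Set (Projectivization ℝ (Fin 3 → ℝ)) :=
  closure (embR2 '' S) ∩ lineAtInf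

namespace Projectivization

variable {K V : Type*} [DivisionRing K] [AddCommGroup V] [Module K V] [TopologicalSpace V]

theorem continuous_mk' :
    Continuous (Projectivization.mk' K : {v : V // v ≠ 0} → Projectivization K V) :=
  continuous_quotient_mk'

theorem tendsto_mk {α : Type*} {l : Filter α} {f : α → V} (hf : ∀ a, f a ≠ 0) {v : V}
    (hv : v ≠ 0) (hfv : Tendsto f l (𝓝 v)) :
    Tendsto (fun a => mk K (f a) (hf a)) l (𝓝 (mk K v hv)) :=
  (Projectivization.continuous_mk'.tendsto ⟨v, hv⟩).comp (tendsto_subtype_rng.2 hfv)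

end Projectivization

theorem mk_mem_lineAtInf_iff {v : Fin 3 → ℝ} (hv : v ≠ 0) :
    Projectivization.mk ℝ v hv ∈ lineAtInf ↔ v 0 = 0 := by
  obtain ⟨a, ha⟩ := exists_smul_eq_mk_rep ℝ v hv
  change (mk ℝ v hv).rep 0 = 0 ↔ _
  simp only [← ha, Pi.smul_apply, Units.smul_def, smul_eq_mul,
    mul_eq_zero, a.ne_zero, false_or]

theorem embR2_div (x y : ℝ) {s : ℝ} (hs : s ≠ 0) :
    embR2 (x / s, y / s) = Projectivization.mk ℝ ![s, x, y] (fun h => hs (congrFun h 0)) := by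
  rw [embR2, mk_eq_mk_iff]
  refine ⟨Units.mk0 s⁻¹ (inv_ne_zero hs), ?_⟩
  ext j
  fin_cases j <;> simp [Units.smul_def, hs] <;> field_simp

theorem prod_sq_sub_mul_eq_zero {r : ℕ} (c d : Fin r → ℝ) (i : Fin r) (s : ℝ) :
    ∏ j, (c j * (d i * s) - d j * (c i * s)) ^ 2 = 0 :=
  Finset.prod_eq_zero (Finset.mem_univ i) (by ring)

theorem stmt13 (r : ℕ) (c d : Fin r → ℝ) (hcd : ∀ i, c i * d i ≠ 0)
    (h : ℝ × ℝ → ℝ × ℝ)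
    (hh : ∀ p : ℝ × ℝ,
      h p = (p.1 ^ 2 / (1 + ∏ i, (c i * p.1 - d i * p.2) ^ 2),
             p.2 ^ 2 / (1 + ∏ i, (c i * p.1 - d i * p.2) ^ 2))) (i : Fin r) :
    (∀ t : ℝ, t ≠ 0 → h (d i / t, c i / t) = ((d i) ^ 2 / t ^ 2, (c i) ^ 2 / t ^ 2)) ∧
    Tendsto (fun t : ℝ => embR2 (h (d i / t, c i / t))) (𝓝[>] 0)
      (𝓝 (Projectivization.mk ℝ ![0, (d i) ^ 2, (c i) ^ 2] (by
        intro hv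
        have h1 := congrFun hv 1
        simp at h1
        exact (fun hd0 => hcd i (by rw [hd0, mul_zero])) h1))) ∧
    Projectivization.mk ℝ ![0, (d i) ^ 2, (c i) ^ 2] (by
        intro hv
        have h1 := congrFun hv 1
        simp at h1
        exact (fun hd0 => hcd i (by rw [hd0, mul_zero])) h1) ∈
      ptsAtInf (Set.range h) := by
  have hd : d i ^ 2 ≠ 0 := pow_ne_zero 2 (right_ne_zero_of_mul (hcd i))
  have hne (s : ℝ) : ![s, d i ^ 2, c i ^ 2] ≠ 0 := fun h0 => hd (congrFun h0 1)
  have hline (t : ℝ) : h (d i / t, c i / t) = (d i ^ 2 / t ^ 2, c i ^ 2 / t ^ 2) := by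
    simp only [hh, div_eq_mul_inv, prod_sq_sub_mul_eq_zero, add_zero,
      inv_one, mul_one, mul_pow, inv_pow]
  have hembed : ∀ᶠ t in 𝓝[>] (0 : ℝ),
      embR2 (h (d i / t, c i / t)) = Projectivization.mk ℝ _ (hne (t ^ 2)) := by
    filter_upwards [self_mem_nhdsWithin] with t ht
    rw [hline t, embR2_div _ _ (pow_ne_zero 2 (ne_of_gt ht))]
  have hlim : Tendsto (fun t : ℝ => embR2 (h (d i / t, c i / t))) (𝓝[>] 0)
      (𝓝 (Projectivization.mk ℝ _ (hne 0))) := by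
    refine (tendsto_mk (fun t => hne (t ^ 2)) (hne 0) ?_).congr' (EventuallyEq.symm hembed)
    have hcont : Continuous fun t : ℝ => ![t ^ 2, d i ^ 2, c i ^ 2] := by fun_prop
    simpa using hcont.continuousWithinAt.tendsto (s := Ioi 0) (x := 0)
  refine ⟨fun t _ => hline t, hlim, mem_closure_of_tendsto hlim (Eventually.of_forall fun t =>
    mem_image_of_mem _ (mem_range_self _)), (mk_mem_lineAtInf_iff _).2 rfl⟩
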